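/- Let P_· be an SPPS solution of the DPRE with 𝒯-periodic data A_k ∈ ℝ^{n×n}, C_k ∈ ℝ^{m×n}, symmetric positive definite Q_k and R_k, and let λ_min(Q_·) = min over one period of the smallest eigenvalue of Q_k and λ_max(P_·) = max over one period of the largest eigenvalue of P_k. Then for every k ∈ ℕ the monodromy matrix Φ_{P_k} satisfies ρ(Φ_{P_k}) ≤ √(1 − λ_min(Q_·)/λ_max(P_·)) and ‖Φ_{P_k}‖₂ ≤ √(λ_max(P_·)/λ_min(Q_·)); in particular Φ_{P_k} is Schur stable. -/

import Mathlib

open Matrix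

/-- A real square matrix is Schur stable if every complex eigenvalue has modulus `< 1`. -/
def SchurStable {n : ℕ} (A : Matrix (Fin n) (Fin n) ℝ) : Prop :=
  ∀ μ ∈ spectrum ℂ (A.map (algebraMap ℝ ℂ)), ‖μ‖ < 1

/-- The (real) spectral radius of a real square matrix, via its complex spectrum. -/
noncomputable def specRad {n : ℕ} (A : Matrix (Fin n) (Fin n) ℝ) : ℝ :=
  (spectralRadius ℂ (A.map (algebraMap ℝ ℂ))).toReal

/-- Smallest eigenvalue of a real symmetric matrix (via its real spectrum). -/
noncomputable def minEig {n : ℕ} (M : Matrix (Fin n) (Fin n) ℝ) : ℝ :=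
  sInf (spectrum ℝ M)

/-- Largest eigenvalue of a real symmetric matrix (via its real spectrum). -/
noncomputable def maxEig {n : ℕ} (M : Matrix (Fin n) (Fin n) ℝ) : ℝ :=
  sSup (spectrum ℝ M)

/-- `phiProd F k h = F (k+h-1) * ⋯ * F (k+1) * F k`. -/
def phiProd {n : ℕ} (F : ℕ → Matrix (Fin n) (Fin n) ℝ) (k : ℕ) :
    ℕ → Matrix (Fin n) (Fin n) ℝ
  | 0 => 1
  | h + 1 => F (k + h) * phiProd F k h

/-- The Riccati update map `P ↦ A P Aᵀ + Q − A P Cᵀ (C P Cᵀ + R)⁻¹ C P Aᵀ`. -/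
noncomputable def riccatiMap {n m : ℕ}
    (A : Matrix (Fin n) (Fin n) ℝ) (C : Matrix (Fin m) (Fin n) ℝ)
    (Q : Matrix (Fin n) (Fin n) ℝ) (R : Matrix (Fin m) (Fin m) ℝ)
    (P : Matrix (Fin n) (Fin n) ℝ) : Matrix (Fin n) (Fin n) ℝ :=
  A * P * Aᵀ + Q - A * P * Cᵀ * (C * P * Cᵀ + R)⁻¹ * (C * P * Aᵀ)

/-- The closed-loop (feedback) matrix `Ã_{P_k} = A_k − A_k P_k C_kᵀ (C_k P_k C_kᵀ + R_k)⁻¹ C_k`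
associated with a solution `P` of the DPRE. -/
noncomputable def feedback {n m : ℕ}
    (A : ℕ → Matrix (Fin n) (Fin n) ℝ) (C : ℕ → Matrix (Fin m) (Fin n) ℝ)
    (R : ℕ → Matrix (Fin m) (Fin m) ℝ) (P : ℕ → Matrix (Fin n) (Fin n) ℝ)
    (k : ℕ) : Matrix (Fin n) (Fin n) ℝ :=
  A k - A k * P k * (C k)ᵀ * (C k * P k * (C k)ᵀ + R k)⁻¹ * C k

open scoped Matrix.Norms.L2Operator

/-!
With the Kalman gain `K`, the Riccati map has the Joseph form `Ã P Ãᵀ + Q + K R Kᵀ`, so along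
the solution `Ã_j P_j Ã_jᵀ + Q_j ≤ P_{j+1}` in the Loewner order. Chaining this over one period
and using periodicity gives the Lyapunov inequality `Φ P_k Φᵀ + Q ≤ P_k` for the monodromy
matrix `Φ`, where `q • 1 ≤ Q` and `P_k ≤ p • 1` with `q = λ_min(Q_·)`, `p = λ_max(P_·)`.
Evaluating it at a complex eigenvector `v` of `Φᵀ` (which has the spectrum of `Φ`) with
eigenvalue `μ` gives `q ‖v‖² ≤ (1 - |μ|²) v* P_k v ≤ (1 - |μ|²) p ‖v‖²`, which bounds the
spectral radius. Since also `q • 1 ≤ P_k`, conjugating by `Φ` gives `q Φ Φᵀ ≤ Φ P_k Φᵀ ≤ p • 1`,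
and the C⋆-identity `‖Φ‖² = ‖Φ Φᵀ‖` bounds the norm.
-/

open scoped MatrixOrder ComplexOrder

namespace Matrix

variable {ι : Type*}

theorem spectrum_transpose [Fintype ι] [DecidableEq ι] {R : Type*} [CommRing R]
    (A : Matrix ι ι R) : spectrum R Aᵀ = spectrum R A := by
  ext μ
  rw [spectrum.mem_iff, spectrum.mem_iff, isUnit_iff_isUnit_det, isUnit_iff_isUnit_det,
    ← det_transpose, transpose_sub, transpose_transpose, Algebra.algebraMap_eq_smul_one,
    transpose_smul, transpose_one]

theorem mul_mul_transpose_mono [Fintype ι] {m : Type*} [Fintype m] {A B : Matrix ι ι ℝ}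
    (h : A ≤ B) (M : Matrix m ι ℝ) : M * A * Mᵀ ≤ M * B * Mᵀ := by
  rw [le_iff, ← Matrix.sub_mul, ← Matrix.mul_sub, ← conjTranspose_eq_transpose_of_trivial]
  exact (le_iff.mp h).mul_mul_conjTranspose_same M

theorem mul_mul_transpose_nonneg [Fintype ι] {m : Type*} [Fintype m] {A : Matrix ι ι ℝ}
    (h : 0 ≤ A) (M : Matrix m ι ℝ) : 0 ≤ M * A * Mᵀ := by
  simpa using mul_mul_transpose_mono h M

theorem le_of_mul_mul_transpose_add_le [Fintype ι] {Φ P Q : Matrix ι ι ℝ} (hP : 0 ≤ P)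
    (h : Φ * P * Φᵀ + Q ≤ P) : Q ≤ P :=
  (le_add_of_nonneg_left (mul_mul_transpose_nonneg hP Φ)).trans h

theorem le_of_smul_one_le_smul_one [Fintype ι] [DecidableEq ι] [Nonempty ι] {a b : ℝ}
    (h : a • (1 : Matrix ι ι ℝ) ≤ b • 1) : a ≤ b := by
  obtain ⟨i⟩ := ‹Nonempty ι›
  simpa using (le_iff.mp h).diag_nonneg (i := i)

theorem PosSemidef.map_ofReal [Fintype ι] [DecidableEq ι] {M : Matrix ι ι ℝ}
    (hM : M.PosSemidef) : (M.map (algebraMap ℝ ℂ)).PosSemidef := by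
  obtain ⟨B, rfl⟩ := CStarAlgebra.nonneg_iff_eq_star_mul_self.mp hM.nonneg
  have : (star B).map (algebraMap ℝ ℂ) = (B.map (algebraMap ℝ ℂ))ᴴ := by
    ext i j
    simp
  rw [Matrix.map_mul, this]
  exact posSemidef_conjTranspose_mul_self _

theorem map_ofReal_mono [Fintype ι] [DecidableEq ι] {A B : Matrix ι ι ℝ} (h : A ≤ B) :
    A.map (algebraMap ℝ ℂ) ≤ B.map (algebraMap ℝ ℂ) := by
  have : B.map (algebraMap ℝ ℂ) - A.map (algebraMap ℝ ℂ) = (B - A).map (algebraMap ℝ ℂ) := by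
    ext i j
    simp
  rw [le_iff, this]
  exact (le_iff.mp h).map_ofReal

theorem conjTranspose_map_ofReal (Φ : Matrix ι ι ℝ) :
    (Φ.map (algebraMap ℝ ℂ))ᴴ = Φᵀ.map (algebraMap ℝ ℂ) := by
  ext i j
  simp

theorem map_ofReal_mul_mul_transpose [Fintype ι] (Φ P : Matrix ι ι ℝ) :
    (Φ * P * Φᵀ).map (algebraMap ℝ ℂ) =
      Φ.map (algebraMap ℝ ℂ) * P.map (algebraMap ℝ ℂ) * (Φ.map (algebraMap ℝ ℂ))ᴴ := by
  rw [Matrix.map_mul, Matrix.map_mul, conjTranspose_map_ofReal]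

theorem map_ofReal_smul_one [DecidableEq ι] (c : ℝ) :
    (c • 1 : Matrix ι ι ℝ).map (algebraMap ℝ ℂ) = c • 1 := by
  ext i j
  by_cases h : i = j <;> simp [h]

theorem l2_opNorm_le_of_nonneg_of_le_smul_one [Fintype ι] [DecidableEq ι] [Nonempty ι]
    {M : Matrix ι ι ℝ} (h0 : 0 ≤ M) {c : ℝ} (h : M ≤ c • 1) : ‖M‖ ≤ c := by
  have hM : IsSelfAdjoint M := .of_nonneg h0
  obtain ⟨x, hx, hxM⟩ :=
    (IsometricContinuousFunctionalCalculus.isGreatest_norm_spectrum (𝕜 := ℝ) M hM).1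
  rw [← Algebra.algebraMap_eq_smul_one, le_algebraMap_iff_spectrum_le hM] at h
  rw [← hxM]
  exact (Real.norm_of_nonneg (spectrum_nonneg_of_nonneg h0 hx)).trans_le (h x hx)

theorem l2_opNorm_le_sqrt_of_lyapunov [Fintype ι] [DecidableEq ι] [Nonempty ι]
    {Φ P Q : Matrix ι ι ℝ} {p q : ℝ} (hq : 0 < q) (hQ : q • 1 ≤ Q) (hP0 : 0 ≤ P)
    (hP : P ≤ p • 1) (hΦ : Φ * P * Φᵀ + Q ≤ P) : ‖Φ‖ ≤ √(p / q) := by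
  have hQ0 : 0 ≤ Q := hQ.trans' (PosSemidef.one.smul hq.le).nonneg
  have hqΦ : q • (Φ * Φᵀ) ≤ p • 1 := calc
    q • (Φ * Φᵀ) = Φ * (q • 1) * Φᵀ := by simp
    _ ≤ Φ * P * Φᵀ := mul_mul_transpose_mono (hQ.trans (le_of_mul_mul_transpose_add_le hP0 hΦ)) Φ
    _ ≤ P := (le_add_of_nonneg_right hQ0).trans hΦ
    _ ≤ p • 1 := hP
  have hΦΦ : Φ * Φᵀ ≤ (p / q) • 1 := by
    rw [le_iff] at hqΦ ⊢
    convert hqΦ.smul (inv_nonneg.mpr hq.le) using 1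
    rw [smul_sub, smul_smul, smul_smul, inv_mul_cancel₀ hq.ne', one_smul, inv_mul_eq_div]
  refine Real.le_sqrt_of_sq_le ?_
  rw [sq, ← CStarRing.norm_self_mul_star, star_eq_conjTranspose,
    conjTranspose_eq_transpose_of_trivial]
  refine l2_opNorm_le_of_nonneg_of_le_smul_one ?_ hΦΦ
  simpa using mul_mul_transpose_nonneg (PosSemidef.one (n := ι) (R := ℝ)).nonneg Φ

variable {𝕜 : Type*} [RCLike 𝕜]

theorem re_star_dotProduct_mulVec_mono [Fintype ι] {A B : Matrix ι ι 𝕜} (h : A ≤ B)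
    (v : ι → 𝕜) : RCLike.re (star v ⬝ᵥ A *ᵥ v) ≤ RCLike.re (star v ⬝ᵥ B *ᵥ v) := by
  have := RCLike.nonneg_iff.mp ((le_iff.mp h).dotProduct_mulVec_nonneg v)
  simpa [sub_mulVec] using this.1

theorem star_dotProduct_mul_mul_conjTranspose_mulVec [Fintype ι] (Φ P : Matrix ι ι 𝕜) {μ : 𝕜}
    {v : ι → 𝕜} (hv : Φᴴ *ᵥ v = μ • v) :
    star v ⬝ᵥ (Φ * P * Φᴴ) *ᵥ v = (‖μ‖ ^ 2 : ℝ) * (star v ⬝ᵥ P *ᵥ v) := by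
  have hleft : star v ᵥ* Φ = star μ • star v := by
    rw [← conjTranspose_conjTranspose Φ, ← star_mulVec, hv, star_smul]
  rw [← mulVec_mulVec, ← mulVec_mulVec, dotProduct_mulVec, hleft, hv, mulVec_smul,
    smul_dotProduct, dotProduct_smul, smul_eq_mul, smul_eq_mul, ← mul_assoc, RCLike.ofReal_pow,
    ← RCLike.conj_mul]
  rfl

theorem norm_sq_le_of_lyapunov [Fintype ι] [DecidableEq ι] {Φ P Q : Matrix ι ι 𝕜} {p q : ℝ}
    (hq : 0 < q) (hQ : q • 1 ≤ Q) (hP0 : 0 ≤ P) (hP : P ≤ p • 1)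
    (hΦ : Φ * P * Φᴴ + Q ≤ P) {μ : 𝕜} (hμ : μ ∈ spectrum 𝕜 Φᴴ) : ‖μ‖ ^ 2 ≤ 1 - q / p := by
  rw [← spectrum_toLin', ← Module.End.hasEigenvalue_iff_mem_spectrum] at hμ
  obtain ⟨v, hv⟩ := hμ.exists_hasEigenvector
  have hΦv : Φᴴ *ᵥ v = μ • v := by simpa using hv.apply_eq_smul
  have hs : 0 < RCLike.re (star v ⬝ᵥ v) :=
    (RCLike.pos_iff.mp (dotProduct_star_self_pos_iff.mpr hv.2)).1
  have h1 := re_star_dotProduct_mulVec_mono hΦ v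
  have h2 := re_star_dotProduct_mulVec_mono hQ v
  have h3 := re_star_dotProduct_mulVec_mono hP v
  have h4 := re_star_dotProduct_mulVec_mono hP0 v
  simp only [add_mulVec, dotProduct_add, map_add, RCLike.re_ofReal_mul,
    star_dotProduct_mul_mul_conjTranspose_mulVec Φ P hΦv, smul_mulVec, one_mulVec,
    dotProduct_smul, zero_mulVec, dotProduct_zero, map_zero, RCLike.smul_re] at h1 h2 h3 h4
  set a := RCLike.re (star v ⬝ᵥ P *ᵥ v)
  set s := RCLike.re (star v ⬝ᵥ v)
  have ha : 0 < a := by nlinarith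
  have hp : 0 < p := by nlinarith
  have hm : q ≤ (1 - ‖μ‖ ^ 2) * p := by nlinarith
  rw [le_sub_comm, div_le_iff₀ hp]
  linarith

theorem norm_sq_le_of_real_lyapunov [Fintype ι] [DecidableEq ι] {Φ P Q : Matrix ι ι ℝ}
    {p q : ℝ} (hq : 0 < q) (hQ : q • 1 ≤ Q) (hP0 : 0 ≤ P) (hP : P ≤ p • 1)
    (hΦ : Φ * P * Φᵀ + Q ≤ P) {μ : ℂ} (hμ : μ ∈ spectrum ℂ (Φ.map (algebraMap ℝ ℂ))) :
    ‖μ‖ ^ 2 ≤ 1 - q / p := by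
  have hΦc := map_ofReal_mono hΦ
  rw [Matrix.map_add _ (map_add _), map_ofReal_mul_mul_transpose] at hΦc
  refine norm_sq_le_of_lyapunov hq ?_ (by simpa using map_ofReal_mono hP0) ?_ hΦc ?_
  · exact map_ofReal_smul_one (ι := ι) q ▸ map_ofReal_mono hQ
  · exact map_ofReal_smul_one (ι := ι) p ▸ map_ofReal_mono hP
  · rwa [conjTranspose_map_ofReal, transpose_map, spectrum_transpose]

end Matrix

open Matrix

theorem Function.Periodic.finite_range_of_nat {α : Type*} {f : ℕ → α} {T : ℕ}
    (hf : Function.Periodic f T) (hT : 0 < T) : (Set.range f).Finite :=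
  ((Set.finite_lt_nat T).image f).subset <| by
    rintro _ ⟨j, rfl⟩
    exact ⟨j % T, Nat.mod_lt j hT, hf.map_mod_nat j⟩

section Eigenvalues

variable {n : ℕ} {M : Matrix (Fin n) (Fin n) ℝ}

theorem smul_one_le_of_le_minEig (hM : M.IsHermitian) {c : ℝ} (hc : c ≤ minEig M) :
    c • 1 ≤ M := by
  rw [← Algebra.algebraMap_eq_smul_one, algebraMap_le_iff_le_spectrum hM.isSelfAdjoint]
  exact fun x hx => hc.trans (csInf_le M.finite_real_spectrum.bddBelow hx)

theorem le_smul_one_of_maxEig_le (hM : M.IsHermitian) {c : ℝ} (hc : maxEig M ≤ c) :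
    M ≤ c • 1 := by
  rw [← Algebra.algebraMap_eq_smul_one, le_algebraMap_iff_spectrum_le hM.isSelfAdjoint]
  exact fun x hx => (le_csSup M.finite_real_spectrum.bddAbove hx).trans hc

theorem minEig_pos [Nonempty (Fin n)] (hM : M.PosDef) : 0 < minEig M := by
  rw [minEig, hM.isHermitian.spectrum_real_eq_range_eigenvalues]
  obtain ⟨i, hi⟩ := (Set.range_nonempty _).csInf_mem (Set.finite_range hM.isHermitian.eigenvalues)
  exact hi ▸ hM.eigenvalues_pos i

theorem specRad_le_sqrt_of_forall_norm_sq_le {c : ℝ}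
    (h : ∀ μ ∈ spectrum ℂ (M.map (algebraMap ℝ ℂ)), ‖μ‖ ^ 2 ≤ c) : specRad M ≤ √c := by
  refine ENNReal.toReal_le_of_le_ofReal (Real.sqrt_nonneg c) (iSup₂_le fun μ hμ => ?_)
  rw [← ENNReal.ofReal_coe_nnreal, coe_nnnorm]
  exact ENNReal.ofReal_le_ofReal (Real.le_sqrt_of_sq_le (h μ hμ))

theorem schurStable_of_forall_norm_sq_le {c : ℝ} (hc : c < 1)
    (h : ∀ μ ∈ spectrum ℂ (M.map (algebraMap ℝ ℂ)), ‖μ‖ ^ 2 ≤ c) : SchurStable M :=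
  fun μ hμ => (pow_lt_one_iff_of_nonneg (norm_nonneg μ) two_ne_zero).mp ((h μ hμ).trans_lt hc)

end Eigenvalues

section Periodic

variable {n T : ℕ} {M : ℕ → Matrix (Fin n) (Fin n) ℝ}

theorem sInf_range_minEig_pos [Nonempty (Fin n)] (hM : Function.Periodic M T) (hT : 0 < T)
    (hpos : ∀ j, (M j).PosDef) : 0 < sInf (Set.range fun j => minEig (M j)) := by
  obtain ⟨j, hj⟩ := (Set.range_nonempty _).csInf_mem ((hM.comp minEig).finite_range_of_nat hT)
  exact hj ▸ minEig_pos (hpos j)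

theorem sInf_range_minEig_smul_one_le (hM : Function.Periodic M T) (hT : 0 < T)
    (hherm : ∀ j, (M j).IsHermitian) (j : ℕ) :
    sInf (Set.range fun j => minEig (M j)) • 1 ≤ M j :=
  smul_one_le_of_le_minEig (hherm j) <| csInf_le
    ((hM.comp minEig).finite_range_of_nat hT).bddBelow ⟨j, rfl⟩

theorem le_sSup_range_maxEig_smul_one (hM : Function.Periodic M T) (hT : 0 < T)
    (hherm : ∀ j, (M j).IsHermitian) (j : ℕ) :
    M j ≤ sSup (Set.range fun j => maxEig (M j)) • 1 :=
  le_smul_one_of_maxEig_le (hherm j) <| le_csSup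
    ((hM.comp maxEig).finite_range_of_nat hT).bddAbove ⟨j, rfl⟩

end Periodic

section Riccati

variable {n m : ℕ}

noncomputable def kalmanGain (A : Matrix (Fin n) (Fin n) ℝ) (C : Matrix (Fin m) (Fin n) ℝ)
    (R : Matrix (Fin m) (Fin m) ℝ) (P : Matrix (Fin n) (Fin n) ℝ) : Matrix (Fin n) (Fin m) ℝ :=
  A * P * Cᵀ * (C * P * Cᵀ + R)⁻¹

theorem riccatiMap_eq_kalmanGain (A : Matrix (Fin n) (Fin n) ℝ) (C : Matrix (Fin m) (Fin n) ℝ)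
    (Q : Matrix (Fin n) (Fin n) ℝ) {R : Matrix (Fin m) (Fin m) ℝ} {P : Matrix (Fin n) (Fin n) ℝ}
    (hS : IsUnit (C * P * Cᵀ + R).det) :
    riccatiMap A C Q R P = (A - kalmanGain A C R P * C) * P * (A - kalmanGain A C R P * C)ᵀ +
      Q + kalmanGain A C R P * R * (kalmanGain A C R P)ᵀ := by
  set K := kalmanGain A C R P
  have hKS : K * (C * P * Cᵀ + R) = A * P * Cᵀ := nonsing_inv_mul_cancel_right _ _ hS
  have hK : K * (C * P * Cᵀ) * Kᵀ + K * R * Kᵀ = A * P * Cᵀ * Kᵀ := by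
    rw [← Matrix.add_mul, ← Matrix.mul_add, hKS]
  change A * P * Aᵀ + Q - K * (C * P * Aᵀ) = _
  rw [transpose_sub, transpose_mul]
  simp only [Matrix.sub_mul, Matrix.mul_sub, Matrix.mul_assoc] at hK ⊢
  rw [← hK]
  abel

theorem feedback_apply (A : ℕ → Matrix (Fin n) (Fin n) ℝ) (C : ℕ → Matrix (Fin m) (Fin n) ℝ)
    (R : ℕ → Matrix (Fin m) (Fin m) ℝ) (P : ℕ → Matrix (Fin n) (Fin n) ℝ) (k : ℕ) :
    feedback A C R P k = A k - kalmanGain (A k) (C k) (R k) (P k) * C k :=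
  rfl

theorem mul_mul_transpose_add_le_riccatiMap (A : Matrix (Fin n) (Fin n) ℝ)
    (C : Matrix (Fin m) (Fin n) ℝ) (Q : Matrix (Fin n) (Fin n) ℝ) {R : Matrix (Fin m) (Fin m) ℝ}
    {P : Matrix (Fin n) (Fin n) ℝ} (hP : P.PosSemidef) (hR : R.PosDef) :
    (A - kalmanGain A C R P * C) * P * (A - kalmanGain A C R P * C)ᵀ + Q ≤
      riccatiMap A C Q R P := by
  have hS : (C * P * Cᵀ + R).PosDef :=
    PosDef.posSemidef_add (mul_mul_transpose_nonneg hP.nonneg C).posSemidef hR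
  rw [riccatiMap_eq_kalmanGain A C Q hS.det_pos.ne'.isUnit]
  exact le_add_of_nonneg_right (mul_mul_transpose_nonneg hR.posSemidef.nonneg _)

end Riccati

section Monodromy

variable {n : ℕ} {F P Q : ℕ → Matrix (Fin n) (Fin n) ℝ}

theorem phiProd_succ_mul_mul_transpose (k h : ℕ) (M : Matrix (Fin n) (Fin n) ℝ) :
    phiProd F k (h + 1) * M * (phiProd F k (h + 1))ᵀ =
      F (k + h) * (phiProd F k h * M * (phiProd F k h)ᵀ) * (F (k + h))ᵀ := by
  simp only [phiProd, transpose_mul, Matrix.mul_assoc]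

theorem phiProd_mul_mul_transpose_le (hF : ∀ j, F j * P j * (F j)ᵀ ≤ P (j + 1)) (k : ℕ) :
    ∀ h, phiProd F k h * P k * (phiProd F k h)ᵀ ≤ P (k + h)
  | 0 => by simp [phiProd]
  | h + 1 => by
    rw [phiProd_succ_mul_mul_transpose]
    exact (mul_mul_transpose_mono (phiProd_mul_mul_transpose_le hF k h) _).trans (hF (k + h))

theorem phiProd_succ_mul_mul_transpose_add_le (hF : ∀ j, F j * P j * (F j)ᵀ + Q j ≤ P (j + 1))
    (hQ : ∀ j, 0 ≤ Q j) (k t : ℕ) :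
    phiProd F k (t + 1) * P k * (phiProd F k (t + 1))ᵀ + Q (k + t) ≤ P (k + (t + 1)) := by
  have hF' j : F j * P j * (F j)ᵀ ≤ P (j + 1) := (le_add_of_nonneg_right (hQ j)).trans (hF j)
  rw [phiProd_succ_mul_mul_transpose]
  exact (add_le_add_left (mul_mul_transpose_mono (phiProd_mul_mul_transpose_le hF' k t) _) _).trans
    (hF (k + t))

end Monodromy

theorem phiProd_feedback_mul_mul_transpose_add_le {n m T : ℕ} (hT : 0 < T)
    {A : ℕ → Matrix (Fin n) (Fin n) ℝ} {C : ℕ → Matrix (Fin m) (Fin n) ℝ}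
    {Q : ℕ → Matrix (Fin n) (Fin n) ℝ} {R : ℕ → Matrix (Fin m) (Fin m) ℝ}
    {P : ℕ → Matrix (Fin n) (Fin n) ℝ} (hQ : ∀ j, 0 ≤ Q j) (hR : ∀ j, (R j).PosDef)
    (hPper : Function.Periodic P T) (hP0 : ∀ j, (P j).PosSemidef)
    (hP : ∀ j, P (j + 1) = riccatiMap (A j) (C j) (Q j) (R j) (P j)) (k : ℕ) :
    phiProd (feedback A C R P) k T * P k * (phiProd (feedback A C R P) k T)ᵀ + Q (k + (T - 1)) ≤
      P k := by
  have hstep j : feedback A C R P j * P j * (feedback A C R P j)ᵀ + Q j ≤ P (j + 1) := by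
    rw [feedback_apply, hP j]
    exact mul_mul_transpose_add_le_riccatiMap _ _ _ (hP0 j) (hR j)
  obtain ⟨t, rfl⟩ : ∃ t, T = t + 1 := ⟨T - 1, by omega⟩
  have := phiProd_succ_mul_mul_transpose_add_le hstep hQ k t
  rwa [hPper k] at this

theorem statement9_general {n m T : ℕ} (hT : 1 ≤ T)
    (A : ℕ → Matrix (Fin n) (Fin n) ℝ) (C : ℕ → Matrix (Fin m) (Fin n) ℝ)
    (Q : ℕ → Matrix (Fin n) (Fin n) ℝ) (R : ℕ → Matrix (Fin m) (Fin m) ℝ)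
    (hQper : ∀ k, Q (k + T) = Q k)
    (hQpd : ∀ k, (Q k).PosDef) (hRpd : ∀ k, (R k).PosDef)
    (P : ℕ → Matrix (Fin n) (Fin n) ℝ)
    (hPper : ∀ k, P (k + T) = P k) (hPpsd : ∀ k, (P k).PosSemidef)
    (hP : ∀ k, P (k + 1) = riccatiMap (A k) (C k) (Q k) (R k) (P k)) :
    ∀ k : ℕ,
      specRad (phiProd (feedback A C R P) k T) ≤
        Real.sqrt (1 - sInf (Set.range fun j => minEig (Q j)) /
          sSup (Set.range fun j => maxEig (P j))) ∧
      ‖phiProd (feedback A C R P) k T‖ ≤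
        Real.sqrt (sSup (Set.range fun j => maxEig (P j)) /
          sInf (Set.range fun j => minEig (Q j))) ∧
      SchurStable (phiProd (feedback A C R P) k T) := by
  intro k
  set Φ := phiProd (feedback A C R P) k T
  set q := sInf (Set.range fun j => minEig (Q j))
  set p := sSup (Set.range fun j => maxEig (P j))
  have hlyap : Φ * P k * Φᵀ + Q (k + (T - 1)) ≤ P k :=
    phiProd_feedback_mul_mul_transpose_add_le hT (fun j => (hQpd j).posSemidef.nonneg) hRpd hPper
      hPpsd hP k
  rcases isEmpty_or_nonempty (Fin n) with hn | hn
  · exact ⟨specRad_le_sqrt_of_forall_norm_sq_le (by simp), by simp [Subsingleton.elim Φ 0],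
      fun μ hμ => by simp at hμ⟩
  have hq : 0 < q := sInf_range_minEig_pos hQper hT hQpd
  have hQq : q • 1 ≤ Q (k + (T - 1)) :=
    sInf_range_minEig_smul_one_le hQper hT (fun j => (hQpd j).isHermitian) _
  have hPp : P k ≤ p • 1 :=
    le_sSup_range_maxEig_smul_one hPper hT (fun j => (hPpsd j).isHermitian) k
  have hp : 0 < p := hq.trans_le <| le_of_smul_one_le_smul_one <|
    (hQq.trans (le_of_mul_mul_transpose_add_le (hPpsd k).nonneg hlyap)).trans hPp
  have hμ μ (hμ : μ ∈ spectrum ℂ (Φ.map (algebraMap ℝ ℂ))) : ‖μ‖ ^ 2 ≤ 1 - q / p :=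
    norm_sq_le_of_real_lyapunov hq hQq (hPpsd k).nonneg hPp hlyap hμ
  exact ⟨specRad_le_sqrt_of_forall_norm_sq_le hμ,
    l2_opNorm_le_sqrt_of_lyapunov hq hQq (hPpsd k).nonneg hPp hlyap,
    schurStable_of_forall_norm_sq_le (sub_lt_self 1 (div_pos hq hp)) hμ⟩

/-- for an SPPS solution `P_·` of the DPRE, each monodromy matrix
`Φ_{P_k} = Ã_{P_{k+𝒯−1}}···Ã_{P_k}` satisfies `ρ(Φ_{P_k}) ≤ √(1 − λ_min(Q_·)/λ_max(P_·))`
and `‖Φ_{P_k}‖₂ ≤ √(λ_max(P_·)/λ_min(Q_·))`; in particular it is Schur stable. -/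
theorem statement9 {n m T : ℕ} (hT : 1 ≤ T)
    (A : ℕ → Matrix (Fin n) (Fin n) ℝ) (C : ℕ → Matrix (Fin m) (Fin n) ℝ)
    (Q : ℕ → Matrix (Fin n) (Fin n) ℝ) (R : ℕ → Matrix (Fin m) (Fin m) ℝ)
    (hAper : ∀ k, A (k + T) = A k) (hCper : ∀ k, C (k + T) = C k)
    (hQper : ∀ k, Q (k + T) = Q k) (hRper : ∀ k, R (k + T) = R k)
    (hQpd : ∀ k, (Q k).PosDef) (hRpd : ∀ k, (R k).PosDef)
    (P : ℕ → Matrix (Fin n) (Fin n) ℝ)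
    (hPper : ∀ k, P (k + T) = P k) (hPpsd : ∀ k, (P k).PosSemidef)
    (hP : ∀ k, P (k + 1) = riccatiMap (A k) (C k) (Q k) (R k) (P k)) :
    ∀ k : ℕ,
      specRad (phiProd (feedback A C R P) k T) ≤
        Real.sqrt (1 - sInf (Set.range fun j => minEig (Q j)) /
          sSup (Set.range fun j => maxEig (P j))) ∧
      ‖phiProd (feedback A C R P) k T‖ ≤
        Real.sqrt (sSup (Set.range fun j => maxEig (P j)) /
          sInf (Set.range fun j => minEig (Q j))) ∧
      SchurStable (phiProd (feedback A C R P) k T) :=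
  statement9_general hT A C Q R hQper hQpd hRpd P hPper hPpsd hP
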